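/- For ψ ∈ [0,1), γ ∈ (0, ψ+1) and every fixed integer ξ ≥ 1, the distribution of the number of occupied boxes of the (γ, ψ) Gnedin–Fisher model converges as n → ∞ to the shifted generalized Waring mixing law: lim_{n→∞} C(n−1, ξ−1) · (n!/ξ!) · V(n,ξ) = w(ξ), where C(n−1,ξ−1) is the binomial coefficient. -/

import Mathlib

open Filter

/-- Rising factorial `(x)_m = x (x+1) ⋯ (x+m-1)`, with `(x)_0 = 1`. -/
noncomputable def riseFact (x : ℝ) (m : ℕ) : ℝ := ∏ i ∈ Finset.range m, (x + i)

/-- The `(γ, ψ)` Gnedin–Fisher Gibbs weight. -/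
noncomputable def gfWeight (γ ψ : ℝ) (n k : ℕ) : ℝ :=
  riseFact γ (n - k) * riseFact (1 - ψ) (k - 1) * riseFact (1 - γ + ψ) (k - 1) /
    (riseFact (1 + ψ) (n - 1) * riseFact (1 + γ - ψ) (n - 1))

/-- The shifted generalized Waring mixing law of the `(γ, ψ)` Gnedin–Fisher model. -/
noncomputable def gfMix (γ ψ : ℝ) (ξ : ℕ) : ℝ :=
  Real.Gamma (γ + 1 - ψ) * Real.Gamma (1 + ψ) / Real.Gamma γ *
    (riseFact (1 - ψ) (ξ - 1) * riseFact (1 - γ + ψ) (ξ - 1)) /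
    ((Nat.factorial (ξ - 1) : ℝ) * (Nat.factorial ξ : ℝ))

lemma riseFact_pos {x : ℝ} (hx : 0 < x) (m : ℕ) : 0 < riseFact x m := by
  apply Finset.prod_pos
  intro i _
  positivity

lemma tendsto_ratio (a b : ℝ) :
    Tendsto (fun n : ℕ => ((n : ℝ) + a) / ((n : ℝ) + b)) atTop (nhds 1) := by
  have hn : Tendsto (fun n : ℕ => (n : ℝ)) atTop atTop := tendsto_natCast_atTop_atTop
  have hinv : Tendsto (fun n : ℕ => ((n : ℝ))⁻¹) atTop (nhds 0) :=
    tendsto_inv_atTop_zero.comp hn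
  have h1 : Tendsto (fun n : ℕ => 1 + a * ((n : ℝ))⁻¹) atTop (nhds (1 + a * 0)) :=
    tendsto_const_nhds.add (tendsto_const_nhds.mul hinv)
  have h2 : Tendsto (fun n : ℕ => 1 + b * ((n : ℝ))⁻¹) atTop (nhds (1 + b * 0)) :=
    tendsto_const_nhds.add (tendsto_const_nhds.mul hinv)
  have h3 := h1.div h2 (by norm_num)
  norm_num at h3
  apply h3.congr'
  filter_upwards [hn.eventually_gt_atTop 0, hn.eventually_gt_atTop (-b)] with n h0 hb
  have hb' : (n : ℝ) + b ≠ 0 := by linarith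
  simp only [Pi.div_apply]
  field_simp

lemma tendsto_ratio0 (a : ℝ) :
    Tendsto (fun n : ℕ => ((n : ℝ) + a) / (n : ℝ)) atTop (nhds 1) := by
  simpa using tendsto_ratio a 0

set_option maxHeartbeats 2000000 in
/-- The law of the number of occupied boxes of the `(γ, ψ)` Gnedin–Fisher model
converges, as `n → ∞`, to the shifted generalized Waring mixing law. -/
theorem gnedin_fisher_two_param_blocks_limit (γ ψ : ℝ)
    (hψ0 : 0 ≤ ψ) (hψ1 : ψ < 1) (hγ0 : 0 < γ) (hγ1 : γ < ψ + 1)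
    (ξ : ℕ) (hξ : 1 ≤ ξ) :
    Tendsto
      (fun n : ℕ =>
        ((n - 1).choose (ξ - 1) : ℝ) * ((Nat.factorial n : ℝ) / (Nat.factorial ξ : ℝ)) *
          gfWeight γ ψ n ξ)
      atTop (nhds (gfMix γ ψ ξ)) := by
  have hΓγ : Real.Gamma γ ≠ 0 := (Real.Gamma_pos_of_pos hγ0).ne'
  set C : ℝ := riseFact (1 - ψ) (ξ - 1) * riseFact (1 - γ + ψ) (ξ - 1) /
      ((ξ.factorial : ℝ) * ((ξ - 1).factorial : ℝ)) with hC
  set f : ℕ → ℝ := fun n =>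
    Real.GammaSeq (1 + ψ) n * Real.GammaSeq (1 + γ - ψ) n / Real.GammaSeq γ n * C *
      (∏ i ∈ Finset.range (ξ - 1), ((n : ℝ) + (-1 - (i : ℝ))) / ((n : ℝ) + (γ - ξ + i))) *
      (((n : ℝ) + ψ) / (n : ℝ)) * (((n : ℝ) + (1 + ψ)) / (n : ℝ)) *
      (((n : ℝ) + (γ - ψ)) / ((n : ℝ) + (γ - 1))) *
      (((n : ℝ) + (1 + γ - ψ)) / ((n : ℝ) + γ)) with hf
  have hG1 := Real.GammaSeq_tendsto_Gamma (1 + ψ)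
  have hG2 := Real.GammaSeq_tendsto_Gamma (1 + γ - ψ)
  have hG3 := Real.GammaSeq_tendsto_Gamma γ
  have hprod : Tendsto
      (fun n : ℕ => ∏ i ∈ Finset.range (ξ - 1),
        ((n : ℝ) + (-1 - (i : ℝ))) / ((n : ℝ) + (γ - ξ + i))) atTop
      (nhds (∏ _i ∈ Finset.range (ξ - 1), (1 : ℝ))) :=
    tendsto_finset_prod _ (fun i _ => tendsto_ratio (-1 - (i : ℝ)) (γ - ξ + i))
  have hlim : Tendsto f atTop (nhds
      (Real.Gamma (1 + ψ) * Real.Gamma (1 + γ - ψ) / Real.Gamma γ * C *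
        (∏ _i ∈ Finset.range (ξ - 1), (1 : ℝ)) * 1 * 1 * 1 * 1)) := by
    have hX := (hG1.mul hG2).div hG3 hΓγ
    exact (((((hX.mul tendsto_const_nhds).mul hprod).mul (tendsto_ratio0 ψ)).mul
      (tendsto_ratio0 (1 + ψ))).mul (tendsto_ratio (γ - ψ) (γ - 1))).mul
      (tendsto_ratio (1 + γ - ψ) γ)
  have hval : Real.Gamma (1 + ψ) * Real.Gamma (1 + γ - ψ) / Real.Gamma γ * C *
      (∏ _i ∈ Finset.range (ξ - 1), (1 : ℝ)) * 1 * 1 * 1 * 1 = gfMix γ ψ ξ := by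
    have hΓeq : Real.Gamma (γ + 1 - ψ) = Real.Gamma (1 + γ - ψ) := by ring_nf
    rw [Finset.prod_const_one, gfMix, hΓeq, hC]
    ring
  rw [← hval]
  apply hlim.congr'
  filter_upwards [eventually_ge_atTop (ξ + 1)] with n hn
  -- now prove f n = LHS n
  have hξn : ξ ≤ n := by omega
  have h1n : 1 ≤ n := by omega
  have hx0 : (0 : ℝ) < (n : ℝ) := by positivity
  have hx2' : (2 : ℝ) ≤ (n : ℝ) := by exact_mod_cast (by omega : 2 ≤ n)
  set x : ℝ := (n : ℝ) with hxdef
  -- key product splittings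
  have hE1 : (∏ j ∈ Finset.range (n + 1), (γ + (j : ℝ))) =
      riseFact γ (n - ξ) * (∏ i ∈ Finset.range (ξ - 1), (x + (γ - ξ + i))) *
        (x + (γ - 1)) * (x + γ) := by
    have hsplit : n + 1 = (n - ξ) + ((ξ - 1) + 1 + 1) := by omega
    rw [hsplit, Finset.prod_range_add, Finset.prod_range_succ, Finset.prod_range_succ]
    simp only [riseFact]
    have hp : ∏ j ∈ Finset.range (ξ - 1), (γ + ((n - ξ + j : ℕ) : ℝ)) =
        ∏ i ∈ Finset.range (ξ - 1), (x + (γ - ξ + i)) := by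
      refine Finset.prod_congr rfl fun j _ => ?_
      push_cast [Nat.cast_sub hξn]
      ring
    have hl1 : γ + ((n - ξ + (ξ - 1) : ℕ) : ℝ) = x + (γ - 1) := by
      push_cast [Nat.cast_sub hξn, Nat.cast_sub hξ]
      ring
    have hl2 : γ + ((n - ξ + (ξ - 1 + 1) : ℕ) : ℝ) = x + γ := by
      push_cast [Nat.cast_sub hξn, Nat.cast_sub hξ]
      ring
    rw [hp, hl1, hl2]
    ring
  have hE2 : ∀ s : ℝ, (∏ j ∈ Finset.range (n + 1), (s + (j : ℝ))) =
      riseFact s (n - 1) * (x + (s - 1)) * (x + s) := by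
    intro s
    have hsplit : n + 1 = (n - 1) + 1 + 1 := by omega
    rw [hsplit, Finset.prod_range_succ, Finset.prod_range_succ]
    simp only [riseFact]
    have hl1 : s + ((n - 1 : ℕ) : ℝ) = x + (s - 1) := by
      push_cast [Nat.cast_sub h1n]; ring
    have hl2 : s + ((n - 1 + 1 : ℕ) : ℝ) = x + s := by
      push_cast [Nat.cast_sub h1n]; ring
    rw [hl1, hl2]
  have hfl : ((ξ - 1).factorial : ℝ) ≠ 0 := by positivity
  have hE3 : ((n - 1).choose (ξ - 1) : ℝ) =
      (∏ i ∈ Finset.range (ξ - 1), (x + (-1 - (i : ℝ)))) / ((ξ - 1).factorial : ℝ) := by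
    rw [eq_div_iff hfl]
    have h3 : ((ξ - 1).factorial * (n - 1).choose (ξ - 1) : ℕ) =
        ∏ i ∈ Finset.range (ξ - 1), (n - 1 - i) := by
      rw [← Nat.descFactorial_eq_factorial_mul_choose, Nat.descFactorial_eq_prod_range]
    calc ((n - 1).choose (ξ - 1) : ℝ) * ((ξ - 1).factorial : ℝ)
        = (((ξ - 1).factorial * (n - 1).choose (ξ - 1) : ℕ) : ℝ) := by push_cast; ring
      _ = ((∏ i ∈ Finset.range (ξ - 1), (n - 1 - i) : ℕ) : ℝ) := by rw [h3]
      _ = ∏ i ∈ Finset.range (ξ - 1), (x + (-1 - (i : ℝ))) := by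
          rw [Nat.cast_prod]
          refine Finset.prod_congr rfl fun i hi => ?_
          have hi' : i < ξ - 1 := Finset.mem_range.mp hi
          have h1 : i ≤ n - 1 := by omega
          push_cast [Nat.cast_sub h1, Nat.cast_sub h1n]
          ring
  -- nonvanishing
  have hPψ : (0:ℝ) < riseFact (1 + ψ) (n - 1) := riseFact_pos (by linarith) _
  have hPφ : (0:ℝ) < riseFact (1 + γ - ψ) (n - 1) := riseFact_pos (by linarith) _
  have hDp : (0:ℝ) < ∏ i ∈ Finset.range (ξ - 1), (x + (γ - ξ + i)) := by
    apply Finset.prod_pos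
    intro i hi
    have h1 : (0:ℝ) ≤ (i : ℝ) := by positivity
    have h2 : (ξ : ℝ) + 1 ≤ x := by rw [hxdef]; exact_mod_cast hn
    linarith
  have hxγ1 : x + (γ - 1) ≠ 0 := by nlinarith
  have hxγ : x + γ ≠ 0 := by nlinarith
  have hd1 : x + (1 + ψ - 1) ≠ 0 := by nlinarith
  have hd2 : x + (1 + ψ) ≠ 0 := by nlinarith
  have hd3 : x + (1 + γ - ψ - 1) ≠ 0 := by nlinarith
  have hd4 : x + (1 + γ - ψ) ≠ 0 := by nlinarith
  have hfξ : ((ξ).factorial : ℝ) ≠ 0 := by positivity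
  have hfn : ((n).factorial : ℝ) ≠ 0 := by positivity
  have hxpow : x ^ (γ : ℝ) ≠ 0 := (Real.rpow_pos_of_pos hx0 γ).ne'
  -- the Gamma-sequence ratio
  have hx2 : x ^ ((1:ℝ) + ψ) * x ^ (1 + γ - ψ) = x ^ (γ:ℝ) * x * x := by
    rw [← Real.rpow_add hx0, show (1 + ψ) + (1 + γ - ψ) = γ + 1 + 1 by ring,
      Real.rpow_add hx0, Real.rpow_add hx0, Real.rpow_one]
  have hE1' : (∏ j ∈ Finset.range (n + 1), ((1 + ψ) + (j : ℝ))) ≠ 0 := by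
    rw [hE2 (1 + ψ)]
    exact mul_ne_zero (mul_ne_zero hPψ.ne' hd1) hd2
  have hE2' : (∏ j ∈ Finset.range (n + 1), ((1 + γ - ψ) + (j : ℝ))) ≠ 0 := by
    rw [hE2 (1 + γ - ψ)]
    exact mul_ne_zero (mul_ne_zero hPφ.ne' hd3) hd4
  have hG : Real.GammaSeq (1 + ψ) n * Real.GammaSeq (1 + γ - ψ) n / Real.GammaSeq γ n =
      x * x * ((n.factorial : ℝ) * (∏ j ∈ Finset.range (n + 1), (γ + (j : ℝ))) /
        ((∏ j ∈ Finset.range (n + 1), ((1 + ψ) + (j : ℝ))) *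
          (∏ j ∈ Finset.range (n + 1), ((1 + γ - ψ) + (j : ℝ))))) := by
    simp only [Real.GammaSeq]
    rw [div_mul_div_comm, div_div_div_comm]
    rw [show (x ^ ((1:ℝ) + ψ) * (n.factorial : ℝ)) * (x ^ ((1:ℝ) + γ - ψ) * (n.factorial : ℝ))
        = (x ^ (γ:ℝ) * x * x) * ((n.factorial : ℝ) * (n.factorial : ℝ)) by
      rw [← hx2]; ring]
    field_simp
    ring
  -- main computation
  simp only [hf]
  rw [hG, hE1, hE2 (1 + ψ), hE2 (1 + γ - ψ), Finset.prod_div_distrib, gfWeight, hE3, hC]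
  rw [← hxdef]
  have hDp' := hDp.ne'
  have hx0' := hx0.ne'
  field_simp
  ring
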